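/- arXiv:2301.00095 — 4 statements merged into one kernel-verified Lean document; each statement's English description precedes it below -/
import Mathlib

section
/- Let n ≥ 1 and 0 < α < 2 be real numbers and let (X,d) be a pseudometric space. Then there exists a constant C > 0, depending only on n and α, such that for all s, t > 0 and all x, y, z ∈ X one has q_α(t,x,z)·q_α(s,z,y) ≤ C·q_α(s+t,x,y)·(q_α(t,x,z) + q_α(s,z,y)). -/
/-!
The product of two positive numbers is at most their minimum times their sum, so it suffices to
bound `min (q_α(t,x,z)) (q_α(s,z,y))` by a multiple of `q_α(s+t,x,y)`, i.e. by a multiple of both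
`(s+t)^{-n/α}` and `(s+t)·d(x,y)^{-n-α}`. For the first, pick the factor with the larger time,
which is at least `(s+t)/2`; for the second, the factor with the larger distance, which by the
triangle inequality is at least `d(x,y)/2`.
-/

/-- The fractional heat kernel profile `q_α(t,x,y) = min{t^{-n/α}, t·d(x,y)^{-n-α}}`,
with the convention that `d(x,y)^{-n-α} = +∞` (so `q_α(t,x,y) = t^{-n/α}`)
when `d(x,y) = 0`. -/
noncomputable def qProfile {X : Type*} [PseudoMetricSpace X] (n α t : ℝ) (x y : X) : ℝ :=
  if dist x y = 0 then t ^ (-n / α)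
  else min (t ^ (-n / α)) (t * dist x y ^ (-n - α))

theorem mul_le_min_mul_add {R : Type*} [CommSemiring R] [LinearOrder R] [IsOrderedRing R]
    {a b : R} (ha : 0 ≤ a) (hb : 0 ≤ b) : a * b ≤ min a b * (a + b) := by
  rw [← min_mul_max a b]
  exact mul_le_mul_of_nonneg_left (max_le_add_of_nonneg ha hb) (le_min ha hb)

theorem Real.rpow_neg_le_two_rpow_mul_rpow_neg {a b p : ℝ} (hb : 0 < b) (hba : b ≤ 2 * a)
    (hp : 0 ≤ p) : a ^ (-p) ≤ 2 ^ p * b ^ (-p) := by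
  calc a ^ (-p) ≤ (b / 2) ^ (-p) :=
        Real.rpow_le_rpow_of_nonpos (by positivity) (by linarith) (neg_nonpos.mpr hp)
    _ = 2 ^ p * b ^ (-p) := by
        rw [Real.div_rpow hb.le zero_le_two, Real.rpow_neg zero_le_two, div_inv_eq_mul, mul_comm]

section qProfile

variable {X : Type*} [PseudoMetricSpace X] {n α s t : ℝ}

theorem qProfile_pos (ht : 0 < t) (x y : X) : 0 < qProfile n α t x y := by
  unfold qProfile
  split_ifs with h
  · positivity
  · have hd : 0 < dist x y := dist_nonneg.lt_of_ne' h
    positivity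

theorem qProfile_le_rpow (x y : X) : qProfile n α t x y ≤ t ^ (-n / α) := by
  unfold qProfile
  split_ifs
  exacts [le_rfl, min_le_left _ _]

theorem qProfile_le_mul_dist_rpow {x y : X} (h : dist x y ≠ 0) :
    qProfile n α t x y ≤ t * dist x y ^ (-n - α) := by
  rw [qProfile, if_neg h]
  exact min_le_right _ _

theorem le_mul_qProfile {c C : ℝ} (hC : 0 ≤ C) {x y : X} (htime : c ≤ C * t ^ (-n / α))
    (hspace : dist x y ≠ 0 → c ≤ C * (t * dist x y ^ (-n - α))) :
    c ≤ C * qProfile n α t x y := by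
  unfold qProfile
  split_ifs with h
  · exact htime
  · rw [mul_min_of_nonneg _ _ hC]
    exact le_min htime (hspace h)

theorem min_qProfile_le_time (hnα : 0 ≤ n / α) (hs : 0 < s) (ht : 0 < t) (x y z : X) :
    min (qProfile n α t x z) (qProfile n α s z y) ≤ 2 ^ (n / α) * (s + t) ^ (-n / α) := by
  rw [neg_div]
  rcases le_total s t with hst | hts
  · refine (min_le_left _ _).trans <| (qProfile_le_rpow x z).trans ?_
    rw [neg_div]
    exact Real.rpow_neg_le_two_rpow_mul_rpow_neg (by linarith) (by linarith) hnα
  · refine (min_le_right _ _).trans <| (qProfile_le_rpow z y).trans ?_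
    rw [neg_div]
    exact Real.rpow_neg_le_two_rpow_mul_rpow_neg (by linarith) (by linarith) hnα

theorem min_qProfile_le_space (hnα : 0 ≤ n + α) (hs : 0 < s) (ht : 0 < t) {x y : X} (z : X)
    (hxy : dist x y ≠ 0) :
    min (qProfile n α t x z) (qProfile n α s z y) ≤
      2 ^ (n + α) * ((s + t) * dist x y ^ (-n - α)) := by
  have hd : 0 < dist x y := dist_nonneg.lt_of_ne' hxy
  have hdecay {u r : ℝ} (hu : 0 ≤ u) (hust : u ≤ s + t) (hr : dist x y ≤ 2 * r) :
      u * r ^ (-n - α) ≤ 2 ^ (n + α) * ((s + t) * dist x y ^ (-n - α)) := by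
    have hr' : r ^ (-n - α) ≤ 2 ^ (n + α) * dist x y ^ (-n - α) := by
      simpa only [neg_add'] using Real.rpow_neg_le_two_rpow_mul_rpow_neg hd hr hnα
    calc u * r ^ (-n - α) ≤ u * (2 ^ (n + α) * dist x y ^ (-n - α)) := by gcongr
      _ ≤ (s + t) * (2 ^ (n + α) * dist x y ^ (-n - α)) := by gcongr
      _ = _ := mul_left_comm _ _ _
  rcases le_total (dist x y) (2 * dist x z) with hxz | hzx
  · have hxz0 : dist x z ≠ 0 := by linarith
    exact (min_le_left _ _).trans <|
      (qProfile_le_mul_dist_rpow hxz0).trans (hdecay ht.le (by linarith) hxz)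
  · have hzy : dist x y ≤ 2 * dist z y := by linarith [dist_triangle x z y]
    have hzy0 : dist z y ≠ 0 := by linarith
    exact (min_le_right _ _).trans <|
      (qProfile_le_mul_dist_rpow hzy0).trans (hdecay hs.le (by linarith) hzy)

theorem min_qProfile_le_mul_qProfile_add (hn : 0 ≤ n) (hα : 0 < α) (hs : 0 < s) (ht : 0 < t)
    (x y z : X) :
    min (qProfile n α t x z) (qProfile n α s z y) ≤
      (2 ^ (n / α) + 2 ^ (n + α)) * qProfile n α (s + t) x y := by
  refine le_mul_qProfile (by positivity) ?_ fun hxy => ?_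
  · calc _ ≤ 2 ^ (n / α) * (s + t) ^ (-n / α) := min_qProfile_le_time (by positivity) hs ht x y z
      _ ≤ _ := by gcongr; exact le_add_of_nonneg_right (by positivity)
  · calc _ ≤ 2 ^ (n + α) * ((s + t) * dist x y ^ (-n - α)) :=
          min_qProfile_le_space (by positivity) hs ht z hxy
      _ ≤ _ := by gcongr; exact le_add_of_nonneg_left (by positivity)

end qProfile

theorem threeP_inequality_general {X : Type*} [PseudoMetricSpace X] (n α : ℝ)
    (hn : 1 ≤ n) (hα0 : 0 < α) :
    ∃ C : ℝ, 0 < C ∧ ∀ s t : ℝ, 0 < s → 0 < t → ∀ x y z : X,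
      qProfile n α t x z * qProfile n α s z y ≤
        C * qProfile n α (s + t) x y * (qProfile n α t x z + qProfile n α s z y) := by
  refine ⟨2 ^ (n / α) + 2 ^ (n + α), by positivity, fun s t hs ht x y z => ?_⟩
  have hq {u : ℝ} (hu : 0 < u) (a b : X) := (qProfile_pos (n := n) (α := α) hu a b).le
  calc qProfile n α t x z * qProfile n α s z y
      ≤ min (qProfile n α t x z) (qProfile n α s z y) *
          (qProfile n α t x z + qProfile n α s z y) := mul_le_min_mul_add (hq ht x z) (hq hs z y)
    _ ≤ _ := by
        gcongr
        · exact add_nonneg (hq ht x z) (hq hs z y)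
        · exact min_qProfile_le_mul_qProfile_add (by linarith) hα0 hs ht x y z

/-- The 3P-inequality for the fractional heat kernel profile. -/
theorem threeP_inequality {X : Type*} [PseudoMetricSpace X] (n α : ℝ)
    (hn : 1 ≤ n) (hα0 : 0 < α) (hα2 : α < 2) :
    ∃ C : ℝ, 0 < C ∧ ∀ s t : ℝ, 0 < s → 0 < t → ∀ x y z : X,
      qProfile n α t x z * qProfile n α s z y ≤
        C * qProfile n α (s + t) x y * (qProfile n α t x z + qProfile n α s z y) :=
  threeP_inequality_general n α hn hα0
end

section
/- Let n and α be real numbers with 0 < α < 2 ≤ n. Let (X,d) be a compact metric space equipped with a finite Borel measure μ, and let V : X → ℝ be measurable and satisfy the Kato condition of order α with dimension parameter n. Then lim_{t→0⁺} sup_{y∈X} ∫_0^t ∫_X q_α(r,y,z)·|V(z)| dμ(z) dr = 0; that is, for every ε > 0 there exists t₀ > 0 such that for all t ∈ (0,t₀] and all y ∈ X, ∫_0^t ∫_X q_α(r,y,z)·|V(z)| dμ(z) dr ≤ ε. -/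
/-!
By Tonelli the double integral is `∫_X (∫_0^t q_α(r,y,z) dr) |V(z)| dμ(z)`. Splitting the time
axis at `r = d(y,z)^α`, where the two terms of the minimum cross, gives
`∫_0^∞ q_α(r,y,z) dr ≤ (1 + α/(n-α)) d(y,z)^{α-n}`, so the part of `X` near `y` is controlled by
the Kato condition uniformly in `y`. Away from `y`, `q_α(r,y,z) ≤ r R^{-n-α}`, which contributes
at most `t² R^{-n-α} ‖V‖₁`; and `V ∈ L¹` because the Kato condition bounds the mass of `|V| μ` on
balls of a fixed radius and `X` is compact. Working with the finite measure `|V| μ` is also what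
makes Tonelli available.
-/

open MeasureTheory
open scoped ENNReal

/-- The fractional heat kernel profile `q_α(t,x,y) = min{t^{-n/α}, t·d(x,y)^{-n-α}}`,
valued in `ℝ≥0∞`, with the convention that `d(x,y)^{-n-α} = +∞` (so that
`q_α(t,x,y) = t^{-n/α}`) when `d(x,y) = 0`. -/
noncomputable def qProfileE {X : Type*} [PseudoEMetricSpace X] (n α t : ℝ) (x y : X) : ℝ≥0∞ :=
  min (ENNReal.ofReal t ^ (-n / α)) (ENNReal.ofReal t * edist x y ^ (-n - α))

/-- `V` satisfies the Kato condition of order `α` with dimension parameter `n`: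
`lim_{r→0⁺} sup_{x∈X} ∫_{B_r(x)} d(x,y)^{α−n} |V(y)| dμ(y) = 0`
(with the convention `0^{α-n} = +∞` for `α < n`). -/
def KatoCondition {X : Type*} [MetricSpace X] [MeasurableSpace X]
    (μ : Measure X) (n α : ℝ) (V : X → ℝ) : Prop :=
  ∀ ε : ℝ, 0 < ε → ∃ r₀ : ℝ, 0 < r₀ ∧ ∀ r : ℝ, 0 < r → r ≤ r₀ → ∀ x : X,
    ∫⁻ y in Metric.ball x r, edist x y ^ (α - n) * ENNReal.ofReal |V y| ∂μ ≤
      ENNReal.ofReal ε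

open Set Metric

lemma ENNReal.rpow_le_rpow_of_nonpos {a b : ℝ≥0∞} (hab : a ≤ b) {p : ℝ} (hp : p ≤ 0) :
    b ^ p ≤ a ^ p := by
  rw [← neg_neg p, ENNReal.rpow_neg a, ENNReal.rpow_neg b]
  exact ENNReal.inv_le_inv.mpr (ENNReal.rpow_le_rpow hab (neg_nonneg.mpr hp))

lemma lintegral_Ioc_ofReal_mul_le (a : ℝ) (K : ℝ≥0∞) :
    ∫⁻ r in Ioc 0 a, ENNReal.ofReal r * K ≤ ENNReal.ofReal a * ENNReal.ofReal a * K :=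
  calc ∫⁻ r in Ioc 0 a, ENNReal.ofReal r * K
      ≤ ∫⁻ _ in Ioc 0 a, ENNReal.ofReal a * K :=
        setLIntegral_mono' measurableSet_Ioc fun r hr => by gcongr; exact hr.2
    _ = ENNReal.ofReal a * ENNReal.ofReal a * K := by
        rw [setLIntegral_const, Real.volume_Ioc, sub_zero]; ring

lemma lintegral_Ioi_ofReal_rpow {p : ℝ} (hp : p < -1) {s : ℝ} (hs : 0 < s) :
    ∫⁻ r in Ioi s, ENNReal.ofReal r ^ p = ENNReal.ofReal (-s ^ (p + 1) / (p + 1)) := by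
  rw [← integral_Ioi_rpow_of_lt hp hs, ofReal_integral_eq_lintegral_ofReal
    (integrableOn_Ioi_rpow_of_lt hp hs)
    (ae_restrict_of_forall_mem measurableSet_Ioi fun r hr => Real.rpow_nonneg (hs.trans hr).le _)]
  exact setLIntegral_congr_fun measurableSet_Ioi fun r hr =>
    ENNReal.ofReal_rpow_of_pos (hs.trans hr)

lemma lintegral_Ioi_min_rpow_le {n α : ℝ} (hα0 : 0 < α) (hαn : α < n) (d : ℝ≥0∞) :
    ∫⁻ r in Ioi 0, min (ENNReal.ofReal r ^ (-n / α)) (ENNReal.ofReal r * d ^ (-n - α)) ≤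
      (1 + ENNReal.ofReal (α / (n - α))) * d ^ (α - n) := by
  rcases eq_or_ne d 0 with rfl | hd0
  · simp [ENNReal.zero_rpow_of_neg (sub_neg.mpr hαn)]
  rcases eq_or_ne d ∞ with rfl | hdtop
  · simp [ENNReal.top_rpow_of_neg (by linarith : -n - α < 0)]
  obtain ⟨δ, hδ, rfl⟩ : ∃ δ : ℝ, 0 < δ ∧ ENNReal.ofReal δ = d :=
    ⟨d.toReal, ENNReal.toReal_pos hd0 hdtop, ENNReal.ofReal_toReal hdtop⟩
  set s := δ ^ α
  have hs : 0 < s := by positivity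
  have hp : -n / α < -1 := by
    rw [neg_div, neg_lt_neg_iff]; exact (one_lt_div hα0).mpr hαn
  have hnear : ENNReal.ofReal s * ENNReal.ofReal s * ENNReal.ofReal δ ^ (-n - α) =
      ENNReal.ofReal δ ^ (α - n) := by
    rw [← ENNReal.ofReal_rpow_of_pos hδ, ← ENNReal.rpow_add _ _ hd0 hdtop,
      ← ENNReal.rpow_add _ _ hd0 hdtop]
    ring_nf
  have htail : -s ^ (-n / α + 1) / (-n / α + 1) = α / (n - α) * δ ^ (α - n) := by
    rw [← Real.rpow_mul hδ.le, show α * (-n / α + 1) = α - n by field_simp; ring,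
      show -n / α + 1 = -((n - α) / α) by field_simp; ring, neg_div_neg_eq, div_div_eq_mul_div]
    ring
  calc ∫⁻ r in Ioi 0, min (ENNReal.ofReal r ^ (-n / α)) (ENNReal.ofReal r * _)
      = (∫⁻ r in Ioc 0 s, min (ENNReal.ofReal r ^ (-n / α)) (ENNReal.ofReal r * _)) +
          ∫⁻ r in Ioi s, min (ENNReal.ofReal r ^ (-n / α)) (ENNReal.ofReal r * _) := by
        rw [← Ioc_union_Ioi_eq_Ioi hs.le, lintegral_union measurableSet_Ioi Ioc_disjoint_Ioi_same]
    _ ≤ (∫⁻ r in Ioc 0 s, ENNReal.ofReal r * ENNReal.ofReal δ ^ (-n - α)) +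
          ∫⁻ r in Ioi s, ENNReal.ofReal r ^ (-n / α) := by
        gcongr <;> simp
    _ ≤ ENNReal.ofReal s * ENNReal.ofReal s * ENNReal.ofReal δ ^ (-n - α) +
          ENNReal.ofReal (-s ^ (-n / α + 1) / (-n / α + 1)) := by
        rw [lintegral_Ioi_ofReal_rpow hp hs]
        gcongr
        exact lintegral_Ioc_ofReal_mul_le s _
    _ = (1 + ENNReal.ofReal (α / (n - α))) * ENNReal.ofReal δ ^ (α - n) := by
        rw [hnear, htail, ENNReal.ofReal_mul (div_pos hα0 (sub_pos.mpr hαn)).le,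
          ENNReal.ofReal_rpow_of_pos hδ]
        ring

section qProfile

variable {X : Type*} [PseudoMetricSpace X] {n α : ℝ}

lemma measurable_qProfileE [MeasurableSpace X] [OpensMeasurableSpace X] (y : X) :
    Measurable fun p : ℝ × X => qProfileE n α p.1 y p.2 := by
  unfold qProfileE; fun_prop

lemma lintegral_Ioc_qProfileE_le_rpow (hα0 : 0 < α) (hαn : α < n) (t : ℝ) (y z : X) :
    ∫⁻ r in Ioc 0 t, qProfileE n α r y z ≤
      (1 + ENNReal.ofReal (α / (n - α))) * edist y z ^ (α - n) :=
  (lintegral_mono_set Ioc_subset_Ioi_self).trans (lintegral_Ioi_min_rpow_le hα0 hαn _)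

lemma lintegral_Ioc_qProfileE_le_mul_rpow (t : ℝ) (y z : X) :
    ∫⁻ r in Ioc 0 t, qProfileE n α r y z ≤
      ENNReal.ofReal t * ENNReal.ofReal t * edist y z ^ (-n - α) :=
  (lintegral_mono fun _ => min_le_right _ _).trans (lintegral_Ioc_ofReal_mul_le t _)

lemma lintegral_Ioc_lintegral_qProfileE_le [MeasurableSpace X] [OpensMeasurableSpace X]
    (ν : Measure X) [SFinite ν] (hα0 : 0 < α) (hαn : α < n) (t R : ℝ) (y : X) :
    ∫⁻ r in Ioc 0 t, ∫⁻ z, qProfileE n α r y z ∂ν ≤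
      (1 + ENNReal.ofReal (α / (n - α))) * ∫⁻ z in ball y R, edist y z ^ (α - n) ∂ν +
        ENNReal.ofReal t * ENNReal.ofReal t * ENNReal.ofReal R ^ (-n - α) * ν univ := by
  rw [lintegral_lintegral_swap (measurable_qProfileE y).aemeasurable,
    ← lintegral_add_compl _ measurableSet_ball]
  gcongr ?_ + ?_
  · rw [← lintegral_const_mul' _ _ (by finiteness)]
    exact setLIntegral_mono' measurableSet_ball fun z _ =>
      lintegral_Ioc_qProfileE_le_rpow hα0 hαn t y z
  · calc ∫⁻ z in (ball y R)ᶜ, (∫⁻ r in Ioc 0 t, qProfileE n α r y z) ∂ν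
        ≤ ∫⁻ _ in (ball y R)ᶜ,
            ENNReal.ofReal t * ENNReal.ofReal t * ENNReal.ofReal R ^ (-n - α) ∂ν := by
          refine setLIntegral_mono' measurableSet_ball.compl fun z hz => ?_
          refine (lintegral_Ioc_qProfileE_le_mul_rpow t y z).trans ?_
          refine mul_le_mul_right (ENNReal.rpow_le_rpow_of_nonpos ?_ (by linarith)) _
          rw [edist_dist]
          exact ENNReal.ofReal_le_ofReal (not_lt.mp (by simpa [dist_comm] using hz))
      _ ≤ ENNReal.ofReal t * ENNReal.ofReal t * ENNReal.ofReal R ^ (-n - α) * ν univ := by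
          rw [setLIntegral_const]
          gcongr
          exact subset_univ _

end qProfile

lemma setLIntegral_ball_le_rpow_mul_setLIntegral {X : Type*} [PseudoMetricSpace X]
    [MeasurableSpace X] [OpensMeasurableSpace X] (μ : Measure X) (f : X → ℝ≥0∞) (x : X)
    {r p : ℝ} (hp : p ≤ 0) :
    ∫⁻ z in ball x r, f z ∂μ ≤
      ENNReal.ofReal r ^ (-p) * ∫⁻ z in ball x r, edist x z ^ p * f z ∂μ := by
  rw [← lintegral_const_mul' _ _
    (ENNReal.rpow_ne_top_of_nonneg (neg_nonneg.mpr hp) ENNReal.ofReal_ne_top)]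
  refine setLIntegral_mono' measurableSet_ball fun z hz => ?_
  have hr : ENNReal.ofReal r ≠ 0 := by simpa using dist_nonneg.trans_lt (mem_ball'.mp hz)
  have hzr : edist x z ≤ ENNReal.ofReal r := by
    rw [edist_dist]; exact ENNReal.ofReal_le_ofReal (mem_ball'.mp hz).le
  calc f z = ENNReal.ofReal r ^ (-p) * ENNReal.ofReal r ^ p * f z := by
        rw [← ENNReal.rpow_add _ _ hr ENNReal.ofReal_ne_top, neg_add_cancel, ENNReal.rpow_zero,
          one_mul]
    _ ≤ ENNReal.ofReal r ^ (-p) * (edist x z ^ p * f z) := by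
        rw [← mul_assoc]; gcongr _ * ?_ * _; exact ENNReal.rpow_le_rpow_of_nonpos hzr hp

lemma KatoCondition.isFiniteMeasure_withDensity {X : Type*} [MetricSpace X] [CompactSpace X]
    [MeasurableSpace X] [OpensMeasurableSpace X] {μ : Measure X} {n α : ℝ} {V : X → ℝ}
    (hαn : α < n) (hKato : KatoCondition μ n α V) :
    IsFiniteMeasure (μ.withDensity fun z => ENNReal.ofReal |V z|) := by
  obtain ⟨r, hr, hball⟩ := hKato 1 one_pos
  have : IsLocallyFiniteMeasure (μ.withDensity fun z => ENNReal.ofReal |V z|) := by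
    refine ⟨fun x => ⟨ball x r, ball_mem_nhds x hr, ?_⟩⟩
    rw [withDensity_apply _ measurableSet_ball]
    calc _ ≤ _ := setLIntegral_ball_le_rpow_mul_setLIntegral μ _ x (sub_nonpos.mpr hαn.le)
      _ ≤ ENNReal.ofReal r ^ (-(α - n)) * ENNReal.ofReal 1 := by gcongr; exact hball r hr le_rfl x
      _ < ∞ := by finiteness
  exact CompactSpace.isFiniteMeasure

lemma exists_pos_forall_lintegral_Ioc_lintegral_qProfileE_le {X : Type*} [PseudoMetricSpace X]
    [MeasurableSpace X] [OpensMeasurableSpace X] (ν : Measure X) [IsFiniteMeasure ν] {n α : ℝ}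
    (hα0 : 0 < α) (hαn : α < n)
    (hν : ∀ ε : ℝ, 0 < ε → ∃ R : ℝ, 0 < R ∧ ∀ y : X,
      ∫⁻ z in ball y R, edist y z ^ (α - n) ∂ν ≤ ENNReal.ofReal ε)
    {ε : ℝ} (hε : 0 < ε) :
    ∃ t₀ : ℝ, 0 < t₀ ∧ ∀ t : ℝ, 0 < t → t ≤ t₀ → ∀ y : X,
      ∫⁻ r in Ioc 0 t, ∫⁻ z, qProfileE n α r y z ∂ν ≤ ENNReal.ofReal ε := by
  set C := 1 + ENNReal.ofReal (α / (n - α))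
  have hε2 : ENNReal.ofReal (ε / 2) ≠ 0 := by simpa using hε
  obtain ⟨ε₁, hε₁, hCε₁⟩ := ENNReal.exists_nnreal_pos_mul_lt (by finiteness : C ≠ ∞) hε2
  obtain ⟨R, hR, hνR⟩ := hν ε₁ hε₁
  set A := ENNReal.ofReal R ^ (-n - α) * ν univ
  obtain ⟨τ, hτ, hτA⟩ := ENNReal.exists_nnreal_pos_mul_lt (by finiteness : A ≠ ∞) hε2
  refine ⟨min 1 τ, by positivity, fun t ht htτ y => ?_⟩
  have htt : ENNReal.ofReal t * ENNReal.ofReal t ≤ τ := by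
    rw [← ENNReal.ofReal_mul ht.le, ← ENNReal.ofReal_coe_nnreal]
    exact ENNReal.ofReal_le_ofReal (by nlinarith [min_le_left 1 (τ : ℝ), min_le_right 1 (τ : ℝ)])
  calc ∫⁻ r in Ioc 0 t, ∫⁻ z, qProfileE n α r y z ∂ν
      ≤ C * ∫⁻ z in ball y R, edist y z ^ (α - n) ∂ν +
          ENNReal.ofReal t * ENNReal.ofReal t * ENNReal.ofReal R ^ (-n - α) * ν univ :=
        lintegral_Ioc_lintegral_qProfileE_le ν hα0 hαn t R y
    _ ≤ ε₁ * C + τ * A := by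
        rw [mul_comm (ε₁ : ℝ≥0∞), mul_assoc _ _ (ν univ)]
        gcongr
        simpa using hνR y
    _ ≤ ENNReal.ofReal (ε / 2) + ENNReal.ofReal (ε / 2) := add_le_add hCε₁.le hτA.le
    _ = ENNReal.ofReal ε := by rw [← ENNReal.ofReal_add (by positivity) (by positivity)]; ring_nf

lemma KatoCondition.setLIntegral_ball_withDensity_le {X : Type*} [MetricSpace X]
    [MeasurableSpace X] [OpensMeasurableSpace X] {μ : Measure X} {n α : ℝ} {V : X → ℝ}
    (hV : Measurable V) (hKato : KatoCondition μ n α V) {ε : ℝ} (hε : 0 < ε) :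
    ∃ R : ℝ, 0 < R ∧ ∀ y : X, ∫⁻ z in ball y R, edist y z ^ (α - n)
      ∂μ.withDensity (fun z => ENNReal.ofReal |V z|) ≤ ENNReal.ofReal ε := by
  obtain ⟨R, hR, hKR⟩ := hKato ε hε
  refine ⟨R, hR, fun y => ?_⟩
  rw [setLIntegral_withDensity_eq_setLIntegral_mul _ (by fun_prop) (by fun_prop)
    measurableSet_ball]
  simpa only [Pi.mul_apply, mul_comm] using hKR R hR le_rfl y

theorem kato_implies_small_time_integral_general {X : Type*} [MetricSpace X] [CompactSpace X]
    [MeasurableSpace X] [BorelSpace X] (μ : Measure X)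
    (n α : ℝ) (hα0 : 0 < α) (hα2 : α < 2) (hn : 2 ≤ n)
    (V : X → ℝ) (hV : Measurable V) (hKato : KatoCondition μ n α V) :
    ∀ ε : ℝ, 0 < ε → ∃ t₀ : ℝ, 0 < t₀ ∧ ∀ t : ℝ, 0 < t → t ≤ t₀ → ∀ y : X,
      ∫⁻ r in Set.Ioc (0 : ℝ) t, ∫⁻ z, qProfileE n α r y z * ENNReal.ofReal |V z| ∂μ ≤
        ENNReal.ofReal ε := by
  intro ε hε
  have hαn : α < n := hα2.trans_le hn
  have := hKato.isFiniteMeasure_withDensity hαn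
  obtain ⟨t₀, ht₀, hsmall⟩ := exists_pos_forall_lintegral_Ioc_lintegral_qProfileE_le _ hα0 hαn
    (fun _ => hKato.setLIntegral_ball_withDensity_le hV) hε
  refine ⟨t₀, ht₀, fun t ht htt₀ y => le_of_eq_of_le ?_ (hsmall t ht htt₀ y)⟩
  refine setLIntegral_congr_fun measurableSet_Ioc fun r _ => ?_
  rw [lintegral_withDensity_eq_lintegral_mul _ (by fun_prop)
    (show Measurable (qProfileE n α r y) from (measurable_qProfileE y).comp measurable_prodMk_left)]
  simp only [Pi.mul_apply, mul_comm]

/-- For a Kato-class potential `V` on a compact metric measure space,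
`lim_{t→0⁺} sup_{y∈X} ∫_0^t ∫_X q_α(r,y,z)·|V(z)| dμ(z) dr = 0`. -/
theorem kato_implies_small_time_integral {X : Type*} [MetricSpace X] [CompactSpace X]
    [MeasurableSpace X] [BorelSpace X] (μ : Measure X) [IsFiniteMeasure μ]
    (n α : ℝ) (hα0 : 0 < α) (hα2 : α < 2) (hn : 2 ≤ n)
    (V : X → ℝ) (hV : Measurable V) (hKato : KatoCondition μ n α V) :
    ∀ ε : ℝ, 0 < ε → ∃ t₀ : ℝ, 0 < t₀ ∧ ∀ t : ℝ, 0 < t → t ≤ t₀ → ∀ y : X,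
      ∫⁻ r in Set.Ioc (0 : ℝ) t, ∫⁻ z, qProfileE n α r y z * ENNReal.ofReal |V z| ∂μ ≤
        ENNReal.ofReal ε :=
  kato_implies_small_time_integral_general μ n α hα0 hα2 hn V hV hKato
end

section
/- Let n > α > 0 be real numbers. Then there exists a constant C > 0, depending only on n and α, such that for every t ∈ (0,1] and every d > 0, ∫_0^t min{r^{−n/α}, r·d^{−n−α}} dr ≤ C·( t·d^{α−n} + 𝟙_{{d < t^{1/(2α)}}}·d^{α−n} ), where 𝟙_{{d < t^{1/(2α)}}} equals 1 if d < t^{1/(2α)} and 0 otherwise. -/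
open MeasureTheory
open scoped ENNReal

/-! The profile `min{r^{-n/α}, r·d^{-n-α}}` switches from the linear branch to the power branch
at `r = d^α`. Integrating the linear branch up to `d^α` and the integrable tail `r^{-n/α}` beyond
it bounds the integral over all of `(0, ∞)` by a multiple of `d^{α-n}`; when `d ≥ t^{1/(2α)}`,
i.e. `t ≤ d^{2α}`, the linear branch alone gives `t²/2 · d^{-n-α} ≤ t/2 · d^{α-n}`. -/

lemma lintegral_Ioc_mul_const {c : ℝ} (hc : 0 ≤ c) {s : ℝ} (hs : 0 ≤ s) :
    ∫⁻ r in Set.Ioc 0 s, ENNReal.ofReal (r * c) = ENNReal.ofReal (s ^ 2 / 2 * c) := by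
  rw [← ofReal_integral_eq_lintegral_ofReal, ← intervalIntegral.integral_of_le hs,
    intervalIntegral.integral_mul_const, integral_id]
  · ring_nf
  · exact (continuous_id.mul continuous_const).integrableOn_Ioc
  · filter_upwards [ae_restrict_mem measurableSet_Ioc] with r hr
    exact mul_nonneg hr.1.le hc

lemma lintegral_Ioi_rpow_of_lt {p : ℝ} (hp : p < -1) {s : ℝ} (hs : 0 < s) :
    ∫⁻ r in Set.Ioi s, ENNReal.ofReal (r ^ p) = ENNReal.ofReal (-s ^ (p + 1) / (p + 1)) := by
  rw [← ofReal_integral_eq_lintegral_ofReal, integral_Ioi_rpow_of_lt hp hs]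
  · exact integrableOn_Ioi_rpow_of_lt hp hs
  · filter_upwards [ae_restrict_mem measurableSet_Ioi] with r hr
    exact Real.rpow_nonneg (hs.trans hr).le p

lemma lintegral_Ioc_min_le_mul_const (f : ℝ → ℝ) {c : ℝ} (hc : 0 ≤ c) {t : ℝ} (ht : 0 ≤ t) :
    ∫⁻ r in Set.Ioc 0 t, ENNReal.ofReal (min (f r) (r * c)) ≤ ENNReal.ofReal (t ^ 2 / 2 * c) :=
  (lintegral_mono fun _ ↦ ENNReal.ofReal_le_ofReal (min_le_right _ _)).trans_eq
    (lintegral_Ioc_mul_const hc ht)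

lemma lintegral_Ioi_min_rpow_mul_const_le {p : ℝ} (hp : p < -1) {c : ℝ} (hc : 0 ≤ c) {s : ℝ}
    (hs : 0 < s) :
    ∫⁻ r in Set.Ioi 0, ENNReal.ofReal (min (r ^ p) (r * c)) ≤
      ENNReal.ofReal (s ^ 2 / 2 * c) + ENNReal.ofReal (-s ^ (p + 1) / (p + 1)) := by
  rw [← Set.Ioc_union_Ioi_eq_Ioi hs.le,
    lintegral_union measurableSet_Ioi Set.Ioc_disjoint_Ioi_same]
  refine add_le_add (lintegral_Ioc_min_le_mul_const _ hc hs.le) ?_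
  rw [← lintegral_Ioi_rpow_of_lt hp hs]
  exact lintegral_mono fun _ ↦ ENNReal.ofReal_le_ofReal (min_le_left _ _)

lemma rpow_two_mul_mul_rpow_neg_sub {d : ℝ} (hd : 0 < d) (n α : ℝ) :
    d ^ (2 * α) * d ^ (-n - α) = d ^ (α - n) := by
  rw [← Real.rpow_add hd]
  ring_nf

lemma lintegral_Ioi_heat_profile_le {n α : ℝ} (hα : 0 < α) (hαn : α < n) {d : ℝ} (hd : 0 < d) :
    ∫⁻ r in Set.Ioi 0, ENNReal.ofReal (min (r ^ (-n / α)) (r * d ^ (-n - α))) ≤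
      ENNReal.ofReal ((1 / 2 + α / (n - α)) * d ^ (α - n)) := by
  have hp : -n / α < -1 := by rw [div_lt_iff₀ hα]; linarith
  have hsq : (d ^ α) ^ 2 = d ^ (2 * α) := by
    rw [← Real.rpow_natCast, ← Real.rpow_mul hd.le, mul_comm]; norm_num
  have htail : -(d ^ α) ^ (-n / α + 1) / (-n / α + 1) = α / (n - α) * d ^ (α - n) := by
    have hden : -n / α + 1 = -((n - α) / α) := by field_simp; ring
    have hexp : α * -((n - α) / α) = α - n := by field_simp; ring
    rw [hden, ← Real.rpow_mul hd.le, hexp, neg_div_neg_eq]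
    field_simp
  refine (lintegral_Ioi_min_rpow_mul_const_le hp (Real.rpow_nonneg hd.le _)
    (Real.rpow_pos_of_pos hd α)).trans_eq ?_
  rw [hsq, div_mul_eq_mul_div, rpow_two_mul_mul_rpow_neg_sub hd, htail,
    ← ENNReal.ofReal_add (by positivity) (by positivity)]
  ring_nf

/-- The key one-dimensional integral estimate: for `0 < α < n`, `t ∈ (0,1]` and `d > 0`,
`∫_0^t min{r^{−n/α}, r·d^{−n−α}} dr ≤ C (t·d^{α−n} + 𝟙_{d < t^{1/(2α)}}·d^{α−n})`. -/
theorem time_integral_of_heat_profile_bound (n α : ℝ) (hα0 : 0 < α) (hαn : α < n) :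
    ∃ C : ℝ, 0 < C ∧ ∀ t : ℝ, 0 < t → t ≤ 1 → ∀ d : ℝ, 0 < d →
      ∫⁻ r in Set.Ioc (0 : ℝ) t, ENNReal.ofReal (min (r ^ (-n / α)) (r * d ^ (-n - α))) ≤
        ENNReal.ofReal (C * (t * d ^ (α - n) +
          (if d < t ^ (1 / (2 * α)) then (1 : ℝ) else 0) * d ^ (α - n))) := by
  set K := 1 / 2 + α / (n - α)
  have hK : 1 / 2 ≤ K := le_add_of_nonneg_right (div_nonneg hα0.le (sub_pos.mpr hαn).le)
  refine ⟨K, by linarith, fun t ht _ d hd ↦ ?_⟩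
  have hd' : 0 ≤ d ^ (α - n) := Real.rpow_nonneg hd.le _
  split_ifs with hclose
  · calc _ ≤ ∫⁻ r in Set.Ioi 0, ENNReal.ofReal (min (r ^ (-n / α)) (r * d ^ (-n - α))) :=
          lintegral_mono_set Set.Ioc_subset_Ioi_self
      _ ≤ ENNReal.ofReal (K * d ^ (α - n)) := lintegral_Ioi_heat_profile_le hα0 hαn hd
      _ ≤ _ := ENNReal.ofReal_le_ofReal (by gcongr; nlinarith)
  · have htd : t ≤ d ^ (2 * α) := by
      rw [← Real.rpow_inv_le_iff_of_pos ht.le hd.le (by positivity), ← one_div]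
      exact not_lt.mp hclose
    refine (lintegral_Ioc_min_le_mul_const _ (Real.rpow_nonneg hd.le _) ht.le).trans
      (ENNReal.ofReal_le_ofReal ?_)
    calc t ^ 2 / 2 * d ^ (-n - α) ≤ t / 2 * (d ^ (2 * α) * d ^ (-n - α)) := by
          rw [sq, mul_div_right_comm, mul_assoc]
          gcongr
      _ ≤ K * (t * d ^ (α - n) + 0 * d ^ (α - n)) := by
          rw [rpow_two_mul_mul_rpow_neg_sub hd, zero_mul, add_zero]
          nlinarith [mul_nonneg ht.le hd']
end

section
/- Let n ≥ 1 be an integer and let β : ℝ → ℂ be a smooth function whose support is contained in {t ∈ ℝ : 1/2 ≤ |t| ≤ 2}. Then for every N ∈ ℕ there exists a constant C > 0, depending only on n, N and β, such that for all real R ≥ 1 and all r ∈ ℝ, | ∫_{ℝ^n} β(‖ξ‖/R)·e^{i r ξ₁} dξ | ≤ C · R^n · (1 + R|r|)^{−N}, where ξ₁ denotes the first coordinate of ξ ∈ ℝⁿ and ‖ξ‖ its Euclidean norm. -/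
/-!
Substituting `ξ = R • η` turns the integral into `Rⁿ` times the Fourier transform of the radial
function `η ↦ β ‖η‖`, evaluated at a point of norm `R |r| / (2π)`. Since `β` vanishes near `0`,
where the norm is not smooth, that radial function is smooth and compactly supported, hence
Schwartz; so is its Fourier transform, which therefore decays faster than any power of
`1 + ‖·‖`.
-/

open Real FourierTransform Topology
open scoped RealInnerProductSpace SchwartzMap

theorem eventuallyEq_zero_of_support_subset_abs_ge {F : Type*} [Zero F] {β : ℝ → F} {a : ℝ}
    (ha : 0 < a) (h : Function.support β ⊆ {t | a ≤ |t|}) : β =ᶠ[𝓝 0] 0 := by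
  filter_upwards [Metric.ball_mem_nhds (0 : ℝ) ha] with t ht
  exact Function.notMem_support.1 fun ht' ↦ (h ht').not_gt (by simpa using ht)

theorem ContDiff.comp_norm_of_eventuallyEq_zero {E F : Type*} [NormedAddCommGroup E]
    [InnerProductSpace ℝ E] [NormedAddCommGroup F] [NormedSpace ℝ F] {β : ℝ → F} {k : WithTop ℕ∞}
    (hβ : ContDiff ℝ k β) (h0 : β =ᶠ[𝓝 0] 0) : ContDiff ℝ k (fun x : E ↦ β ‖x‖) := by
  rw [contDiff_iff_contDiffAt]
  intro x
  rcases eq_or_ne x 0 with rfl | hx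
  · exact contDiffAt_const.congr_of_eventuallyEq (h0.comp_tendsto tendsto_norm_zero)
  · exact hβ.contDiffAt.comp x (contDiffAt_norm ℝ hx)

theorem HasCompactSupport.comp_norm {E F : Type*} [SeminormedAddCommGroup E] [ProperSpace E]
    [Zero F] {β : ℝ → F} (hβ : HasCompactSupport β) :
    HasCompactSupport (fun x : E ↦ β ‖x‖) := by
  obtain ⟨a, ha⟩ := hβ.isCompact.isBounded.subset_closedBall 0
  refine .of_support_subset_isCompact (isCompact_closedBall (0 : E) a) fun x hx ↦ ?_
  simpa using ha (subset_tsupport _ hx)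

theorem SchwartzMap.exists_norm_le_mul_one_add_rpow_neg {E F : Type*} [NormedAddCommGroup E]
    [NormedSpace ℝ E] [NormedAddCommGroup F] [NormedSpace ℝ F] (f : 𝓢(E, F)) (N : ℕ) :
    ∃ C, 0 < C ∧ ∀ x, ‖f x‖ ≤ C * (1 + ‖x‖) ^ (-(N : ℝ)) := by
  set C := 2 ^ N * (Finset.Iic (N, 0)).sup (fun m ↦ SchwartzMap.seminorm ℝ m.1 m.2) f
  refine ⟨C + 1, by positivity, fun x ↦ ?_⟩
  have h := one_add_le_sup_seminorm_apply (𝕜 := ℝ) (m := (N, 0)) le_rfl le_rfl f x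
  rw [norm_iteratedFDeriv_zero] at h
  rw [Real.rpow_neg (by positivity), Real.rpow_natCast, ← div_eq_mul_inv,
    le_div_iff₀' (by positivity)]
  linarith [norm_nonneg (f x), pow_nonneg (by positivity : (0 : ℝ) ≤ 1 + ‖x‖) N]

theorem one_add_rpow_neg_le_mul_one_add_mul_rpow_neg {c t s : ℝ} (hc : 1 ≤ c) (ht : 0 ≤ t)
    (hs : 0 ≤ s) : (1 + t) ^ (-s) ≤ c ^ s * (1 + c * t) ^ (-s) := by
  have hc0 : 0 < c := by linarith
  calc (1 + t) ^ (-s) = c ^ s * (c * (1 + t)) ^ (-s) := by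
        rw [Real.mul_rpow hc0.le (by positivity), Real.rpow_neg hc0.le, ← mul_assoc,
          mul_inv_cancel₀ (Real.rpow_pos_of_pos hc0 s).ne', one_mul]
    _ ≤ c ^ s * (1 + c * t) ^ (-s) := by
        refine mul_le_mul_of_nonneg_left ?_ (by positivity)
        exact Real.rpow_le_rpow_of_nonpos (by positivity) (by nlinarith) (by linarith)

theorem Real.fourier_comp_inv_smul {V E : Type*} [NormedAddCommGroup V] [InnerProductSpace ℝ V]
    [FiniteDimensional ℝ V] [MeasurableSpace V] [BorelSpace V] [NormedAddCommGroup E]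
    [NormedSpace ℂ E] (f : V → E) {R : ℝ} (hR : R ≠ 0) (w : V) :
    𝓕 (fun v ↦ f (R⁻¹ • v)) w = |R ^ Module.finrank ℝ V| • 𝓕 f (R • w) := by
  simp only [Real.fourier_eq]
  rw [← MeasureTheory.Measure.integral_comp_inv_smul]
  congr! 4 with v
  rw [inner_smul_left, inner_smul_right, RCLike.conj_to_real, ← mul_assoc, inv_mul_cancel₀ hR,
    one_mul]

theorem EuclideanSpace.integral_mul_exp_coord_eq_fourier {ι : Type*} [Fintype ι] [DecidableEq ι]
    (f : EuclideanSpace ℝ ι → ℂ) (i : ι) (r : ℝ) :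
    ∫ ξ, f ξ * Complex.exp (Complex.I * ((r * ξ i : ℝ) : ℂ)) =
      𝓕 f (-(r / (2 * π)) • EuclideanSpace.single i (1 : ℝ)) := by
  rw [Real.fourier_eq']
  congr 1 with ξ
  rw [smul_eq_mul, mul_comm, inner_smul_right, EuclideanSpace.inner_single_right]
  congr 2
  push_cast
  field_simp
  simp

/-- Kernel bound for Littlewood–Paley-type projections: if `β` is smooth and supported in
`{1/2 ≤ |t| ≤ 2}`, then `|∫_{ℝ^n} β(‖ξ‖/R) e^{irξ₁} dξ| ≤ C Rⁿ (1+R|r|)^{−N}`. -/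
theorem littlewood_paley_kernel_bound (n : ℕ) (hn : 0 < n) (β : ℝ → ℂ)
    (hβ : ContDiff ℝ (⊤ : ℕ∞) β)
    (hsupp : Function.support β ⊆ {t : ℝ | 1 / 2 ≤ |t| ∧ |t| ≤ 2}) :
    ∀ N : ℕ, ∃ C : ℝ, 0 < C ∧ ∀ R : ℝ, 1 ≤ R → ∀ r : ℝ,
      ‖∫ ξ : EuclideanSpace ℝ (Fin n),
          β (‖ξ‖ / R) * Complex.exp (Complex.I * ((r * ξ ⟨0, hn⟩ : ℝ) : ℂ))‖ ≤
        C * R ^ n * (1 + R * |r|) ^ (-(N : ℝ)) := by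
  intro N
  have hβ0 : β =ᶠ[𝓝 0] 0 :=
    eventuallyEq_zero_of_support_subset_abs_ge one_half_pos (hsupp.trans fun _ ht ↦ ht.1)
  have hβc : HasCompactSupport β :=
    .of_support_subset_isCompact (isCompact_Icc (a := -2)) (hsupp.trans fun _ ht ↦ abs_le.1 ht.2)
  set g : 𝓢(EuclideanSpace ℝ (Fin n), ℂ) :=
    hβc.comp_norm.toSchwartzMap (hβ.comp_norm_of_eventuallyEq_zero hβ0)
  obtain ⟨C, hC, hdecay⟩ := (𝓕 g).exists_norm_le_mul_one_add_rpow_neg N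
  refine ⟨(2 * π) ^ (N : ℝ) * C, by positivity, fun R hR r ↦ ?_⟩
  have hR0 : 0 < R := by linarith
  set w := -(r / (2 * π)) • EuclideanSpace.single (⟨0, hn⟩ : Fin n) (1 : ℝ)
  have hkernel : (fun ξ : EuclideanSpace ℝ (Fin n) ↦ β (‖ξ‖ / R)) = fun ξ ↦ g (R⁻¹ • ξ) := by
    ext ξ
    simp [g, norm_smul, abs_of_pos hR0, inv_mul_eq_div]
  have hw : 2 * π * ‖R • w‖ = R * |r| := by
    simp only [w, neg_smul, smul_neg, norm_neg, norm_smul, norm_eq_abs, abs_of_pos hR0, norm_div, norm_mul,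
      abs_two, abs_of_pos pi_pos, PiLp.norm_single, norm_one, mul_one]
    field_simp
  rw [EuclideanSpace.integral_mul_exp_coord_eq_fourier (fun ξ ↦ β (‖ξ‖ / R)), hkernel,
    Real.fourier_comp_inv_smul _ hR0.ne', finrank_euclideanSpace_fin]
  calc ‖|R ^ n| • 𝓕 g (R • w)‖ = R ^ n * ‖𝓕 g (R • w)‖ := by
        rw [norm_smul, Real.norm_eq_abs, abs_abs, abs_of_pos (pow_pos hR0 n)]
    _ ≤ R ^ n * (C * (1 + ‖R • w‖) ^ (-(N : ℝ))) := by
        gcongr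
        exact hdecay (R • w)
    _ ≤ R ^ n * (C * ((2 * π) ^ (N : ℝ) * (1 + R * |r|) ^ (-(N : ℝ)))) := by
        rw [← hw]
        gcongr
        exact one_add_rpow_neg_le_mul_one_add_mul_rpow_neg (by linarith [pi_gt_three])
          (norm_nonneg _) (Nat.cast_nonneg N)
    _ = (2 * π) ^ (N : ℝ) * C * R ^ n * (1 + R * |r|) ^ (-(N : ℝ)) := by ring
end
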